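/- arXiv:2410.13551 — 2 statements merged into one kernel-verified Lean document; each statement's English description precedes it below -/
import Mathlib

section
/- Let n ≥ 1 and let b = (b_k)_{k=0}^n be an admissible first order branching pattern, i.e. b arises as the branching pattern (b_k(A))_{k=0}^n of some nonempty A ⊆ 𝕃₀⁽ⁿ⁾. With a_k := 1 + ∑_{j=k+1}^n b_j, the number of subsets A ⊆ 𝕃₀⁽ⁿ⁾ whose branching pattern equals b is ∏_{k=1}^n C(a_k, b_k)·2^{a_k − b_k}, where C(a,b) denotes the binomial coefficient. -/
open Filter
open scoped Classical

noncomputable section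

namespace PWC

/-- Leaves of the binary tree `𝕋⁽ⁿ⁾` of depth `n`: binary words of length `n`
(coordinate `0` is the first step away from the root). -/
abbrev Leaf (n : ℕ) := Fin n → Bool

/-- The age (distance from the leaves) of the youngest common ancestor `u ∧ v` of two
leaves: `n` minus the length of their longest common prefix. -/
def meetAge {n : ℕ} (u v : Leaf n) : ℕ :=
  if u = v then 0 else n - sInf {i : ℕ | ∃ h : i < n, u ⟨i, h⟩ ≠ v ⟨i, h⟩}

/-- Canonical representative (as a leaf) of the ancestor of `u` at age `k`:
keep the first `n - k` coordinates and pad by `false`. -/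
def trunc {n : ℕ} (k : ℕ) (u : Leaf n) : Leaf n :=
  fun i => if (i : ℕ) < n - k then u i else false

/-- The branching points `ℬ(A) ∩ 𝕃_k` of `A` of age `k`, encoded by the canonical
representatives of the corresponding ancestors. -/
def branchPts {n : ℕ} (A : Finset (Leaf n)) (k : ℕ) : Finset (Leaf n) :=
  ((A ×ˢ A).filter (fun p => meetAge p.1 p.2 = k)).image (fun p => trunc k p.1)

/-- `b_k(A)`: the number of branching points of `A` of age `k`. -/
def bcount {n : ℕ} (A : Finset (Leaf n)) (k : ℕ) : ℕ := (branchPts A k).card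

/-- `b_{k,ℓ}(A)`: the number of branching points of `A` of age `ℓ` whose direct
branching ancestor has age `k`; for `k = n+1` the indicator that the oldest branching
point of `A` has age `ℓ` (i.e. the branching points at age `ℓ` having no strictly older
branching ancestor). -/
def b2count {n : ℕ} (A : Finset (Leaf n)) (k l : ℕ) : ℕ :=
  if k = n + 1 then
    ((branchPts A l).filter (fun w => ∀ j, l < j → j ≤ n → trunc j w ∉ branchPts A j)).card
  else
    ((branchPts A l).filter (fun w => trunc k w ∈ branchPts A k ∧
      ∀ j, l < j → j < k → trunc j w ∉ branchPts A j)).card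

/-- `A ≺ B` : `A` is more clustered than `B`. -/
def MoreClustered {n : ℕ} (A B : Finset (Leaf n)) : Prop :=
  ∃ σ : Leaf n → Leaf n, Set.BijOn σ ↑A ↑B ∧
    ∀ u ∈ A, ∀ v ∈ A, meetAge u v ≤ meetAge (σ u) (σ v)

/-- `A ∼ B` : the subtrees of `𝕋⁽ⁿ⁾` generated by `A` and `B` are graph-isomorphic,
i.e. there is a bijection of the leaf sets preserving all meet ages. -/
def EquivClustered {n : ℕ} (A B : Finset (Leaf n)) : Prop :=
  ∃ σ : Leaf n → Leaf n, Set.BijOn σ ↑A ↑B ∧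
    ∀ u ∈ A, ∀ v ∈ A, meetAge (σ u) (σ v) = meetAge u v

/-- A clustering function: vanishes on `∅` and is invariant under isomorphism of the
generated subtrees. -/
def IsClusteringFn {n : ℕ} (Φ : Finset (Leaf n) → ℝ) : Prop :=
  Φ ∅ = 0 ∧ ∀ A B : Finset (Leaf n), EquivClustered A B → Φ A = Φ B

/-- A monotone clustering function. -/
def IsMonotoneClusteringFn {n : ℕ} (Φ : Finset (Leaf n) → ℝ) : Prop :=
  IsClusteringFn Φ ∧
    (∀ A B : Finset (Leaf n), MoreClustered A B → Φ A ≤ Φ B) ∧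
    (∀ A B : Finset (Leaf n), Disjoint A B → Φ (A ∪ B) ≤ Φ A + Φ B)

/-- The partition function `Z_n^{Φ,J}`. -/
def Z (n : ℕ) (Φ : Finset (Leaf n) → ℝ) (J : ℝ) : ℝ :=
  ∑ A : Finset (Leaf n), Real.exp (J * (A.card : ℝ) - Φ A)

/-- The finite-volume free energy `ζ_n^Φ(J) = 2⁻ⁿ ln Z_n^{Φ,J}`. -/
def zetaN (n : ℕ) (Φ : Finset (Leaf n) → ℝ) (J : ℝ) : ℝ :=
  Real.log (Z n Φ J) / 2 ^ n

/-- The canonical partition function `W_n^Φ(a₀)`. -/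
def W (n : ℕ) (Φ : Finset (Leaf n) → ℝ) (a₀ : ℕ) : ℝ :=
  ∑ A ∈ Finset.univ.filter (fun A : Finset (Leaf n) => A.card = a₀), Real.exp (-Φ A)

/-- The finite-volume canonical free energy `ω_n^Φ(ε) = 2⁻ⁿ ln W_n^Φ(ε 2ⁿ)` (for a
dyadic `ε ∈ [0,1]` and `n` large, `⌊ε 2ⁿ⌋ = ε 2ⁿ`). -/
def omegaN (n : ℕ) (Φ : Finset (Leaf n) → ℝ) (ε : ℝ) : ℝ :=
  Real.log (W n Φ ⌊ε * 2 ^ n⌋₊) / 2 ^ n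

/-- The expected density `ρ_n^Φ(J)` of the dry set under the PWC measure. -/
def rhoN (n : ℕ) (Φ : Finset (Leaf n) → ℝ) (J : ℝ) : ℝ :=
  (∑ A : Finset (Leaf n), (A.card : ℝ) * Real.exp (J * (A.card : ℝ) - Φ A)) /
    (2 ^ n * Z n Φ J)

/-- A dyadic rational. -/
def IsDyadic (x : ℝ) : Prop := ∃ (k : ℤ) (m : ℕ), x = (k : ℝ) / 2 ^ m

/-- The hypotheses of the general theory (Proposition 1.2): each `Φ_n` (for `n ≥ 1`) is
a monotone, non-negative clustering function, and `Φ_n(A) ≤ Φ_{n-1}(A) + γ_n` for any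
`A` contained in the leaf set of one of the two subtrees of `𝕋⁽ⁿ⁾` rooted at a child of
the root (identified with `𝕋⁽ⁿ⁻¹⁾` by prepending the corresponding letter), where
`γ_n ≥ 0` and `∑ γ_n 2⁻ⁿ < ∞`. -/
structure GoodSeq (Φ : ∀ n, Finset (Fin n → Bool) → ℝ) (γ : ℕ → ℝ) : Prop where
  mono : ∀ n, 1 ≤ n → IsMonotoneClusteringFn (Φ n)
  nonneg : ∀ n, 1 ≤ n → ∀ A, 0 ≤ Φ n A
  gamma_nonneg : ∀ n, 0 ≤ γ n
  gamma_summable : Summable fun n => γ n / 2 ^ n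
  subtree : ∀ (n : ℕ) (b : Bool) (A : Finset (Fin n → Bool)),
    Φ (n + 1) (A.image fun u => Fin.cons b u) ≤ Φ n A + γ (n + 1)

/-- The first order branching clustering function with parameters `(h_k)_{k=0}^n`, `h`. -/
def foPhi (n : ℕ) (hs : ℕ → ℝ) (h : ℝ) (A : Finset (Leaf n)) : ℝ :=
  if A = ∅ then 0 else (∑ k ∈ Finset.range (n + 1), hs k * (bcount A k : ℝ)) + h

/-- The second order branching clustering function with parameters
`(h_{k,ℓ})_{0 ≤ ℓ < k ≤ n+1}`, `h`. -/
def soPhi (n : ℕ) (H : ℕ → ℕ → ℝ) (h : ℝ) (A : Finset (Leaf n)) : ℝ :=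
  if A = ∅ then 0
  else (∑ k ∈ Finset.range (n + 2), ∑ l ∈ Finset.range k, H k l * (b2count A k l : ℝ)) + h

/-- A non-decreasing (infinite) triangular array. -/
def ArrayMono (H : ℕ → ℕ → ℝ) : Prop :=
  ∀ k k' l l' : ℕ, l < k → l' < k' → k ≤ k' → l ≤ l' → H k l ≤ H k' l'

/-- The Dirichlet energy on `𝕋⁽ⁿ⁾` of `f` (vertices encoded as words of length `≤ n`,
read from the root; a vertex of length `m` has age `n - m` and its parent edge has
conductance `C (n - m)`). -/
def energy (n : ℕ) (C : ℕ → ℝ) (f : List Bool → ℝ) : ℝ :=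
  ∑ m ∈ Finset.Icc 1 n, ∑ v : Fin m → Bool,
    C (n - m) * (f (List.ofFn v) - f (List.ofFn v).dropLast) ^ 2

/-- The capacity of a set of leaves `A ⊆ 𝕃₀⁽ⁿ⁾`. -/
def cap (n : ℕ) (C : ℕ → ℝ) (A : Finset (Leaf n)) : ℝ :=
  sInf {x : ℝ | ∃ f : List Bool → ℝ, f [] = 1 ∧ (∀ u ∈ A, f (List.ofFn u) = 0) ∧
    x = energy n C f}

/-!
Forgetting the last letter of each leaf sends `A ⊆ 𝕃₀⁽ⁿ⁺¹⁾` to its set `B ⊆ 𝕃₀⁽ⁿ⁾` of parents.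
The branching points of `A` of age `k + 1 ≥ 2` are those of `B` of age `k`, and those of age `1`
are the parents both of whose children lie in `A`; hence `#A = #B + b₁(A)`, and summing this up
the tree gives `#A = 1 + ∑_{k ≥ 1} b_k(A)`, so that `#B = b₀ - b₁ = a₁`. Conversely `A` is
recovered from `B`, the `b₁` parents with both children in `A` (`C(a₁, b₁)` choices) and one
child of each of the other `a₁ - b₁` parents (two choices each); since `B` has the pattern
`(a₁, b₂, …, bₙ)`, induction on `n` gives the product.
-/

open Finset

section

variable {m n : ℕ}

@[to_additive]
lemma prod_Icc_shift {M : Type*} [CommMonoid M] (f : ℕ → M) (a b : ℕ) :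
    ∏ k ∈ Icc a b, f (k + 1) = ∏ k ∈ Icc (a + 1) (b + 1), f k := by
  rw [← map_add_right_Icc, prod_map]
  rfl

@[to_additive]
lemma prod_Icc_eq_mul_prod_shift {M : Type*} [CommMonoid M] (f : ℕ → M) {a b : ℕ}
    (hab : a ≤ b + 1) : ∏ k ∈ Icc a (b + 1), f k = f a * ∏ k ∈ Icc a b, f (k + 1) := by
  rw [prod_Icc_shift, ← mul_prod_Ioc_eq_prod_Icc hab, Icc_add_one_left_eq_Ioc]

lemma meetAge_le_iff {u v : Leaf n} {k : ℕ} :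
    meetAge u v ≤ k ↔ ∀ i : Fin n, (i : ℕ) < n - k → u i = v i := by
  unfold meetAge
  split_ifs with huv
  · simp [huv]
  · set S := {i : ℕ | ∃ h : i < n, u ⟨i, h⟩ ≠ v ⟨i, h⟩}
    have hS : S.Nonempty := by
      obtain ⟨i, hi⟩ := Function.ne_iff.mp huv
      exact ⟨i, i.isLt, hi⟩
    obtain ⟨hlt, hne⟩ := Nat.sInf_mem hS
    constructor
    · intro hk i hi
      by_contra h
      have := Nat.sInf_le (show (i : ℕ) ∈ S from ⟨i.isLt, h⟩)
      omega
    · intro h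
      by_contra hk
      exact hne (h ⟨sInf S, hlt⟩ (show sInf S < n - k by omega))

lemma meetAge_eq_zero_iff {u v : Leaf n} : meetAge u v = 0 ↔ u = v := by
  rw [← Nat.le_zero, meetAge_le_iff, funext_iff]
  simp

lemma meetAge_succ_le_iff {u v : Leaf (m + 1)} {k : ℕ} :
    meetAge u v ≤ k + 1 ↔ meetAge (Fin.init u) (Fin.init v) ≤ k := by
  simp [meetAge_le_iff, Fin.forall_fin_succ', Fin.init]

lemma meetAge_of_ne {u v : Leaf (m + 1)} (h : u ≠ v) :
    meetAge u v = meetAge (Fin.init u) (Fin.init v) + 1 := by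
  obtain ⟨j, hj⟩ : ∃ j, meetAge u v = j + 1 :=
    Nat.exists_eq_succ_of_ne_zero (mt meetAge_eq_zero_iff.mp h)
  have := meetAge_succ_le_iff.mp hj.le
  have := meetAge_succ_le_iff.mpr (le_refl (meetAge (Fin.init u) (Fin.init v)))
  omega

lemma meetAge_eq_succ_iff {u v : Leaf (m + 1)} {k : ℕ} :
    meetAge u v = k + 1 ↔ u ≠ v ∧ meetAge (Fin.init u) (Fin.init v) = k := by
  constructor
  · intro h
    have huv : u ≠ v := by
      rintro rfl
      simp [meetAge_eq_zero_iff.mpr rfl] at h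
    exact ⟨huv, by rw [meetAge_of_ne huv] at h; omega⟩
  · rintro ⟨huv, rfl⟩
    exact meetAge_of_ne huv

lemma trunc_zero (u : Leaf n) : trunc 0 u = u := by
  funext i
  simp [trunc]

lemma trunc_succ (k : ℕ) (u : Leaf (m + 1)) :
    trunc (k + 1) u = Fin.snoc (trunc k (Fin.init u)) false := by
  funext i
  induction i using Fin.lastCases with
  | last => simp [trunc]
  | cast i => simp [trunc, Fin.init]

def children (A : Finset (Leaf (m + 1))) (x : Leaf m) : Finset Bool :=
  univ.filter fun c => Fin.snoc x c ∈ A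

@[simp]
lemma mem_children {A : Finset (Leaf (m + 1))} {x : Leaf m} {c : Bool} :
    c ∈ children A x ↔ Fin.snoc x c ∈ A := by
  simp [children]

def childrenEquiv : Finset (Leaf (m + 1)) ≃ (Leaf m → Finset Bool) where
  toFun := children
  invFun φ := univ.filter fun u => u (Fin.last m) ∈ φ (Fin.init u)
  left_inv A := by
    ext u
    simp [Fin.snoc_init_self]
  right_inv φ := by
    funext x
    ext c
    simp

def doubled (A : Finset (Leaf (m + 1))) : Finset (Leaf m) :=
  univ.filter fun x => children A x = univ

lemma mem_doubled {A : Finset (Leaf (m + 1))} {x : Leaf m} :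
    x ∈ doubled A ↔ ∀ c, Fin.snoc x c ∈ A := by
  simp only [doubled, mem_filter, mem_univ, true_and, eq_univ_iff_forall, mem_children]

lemma image_init_eq_filter (A : Finset (Leaf (m + 1))) :
    A.image Fin.init = univ.filter fun x => (children A x).Nonempty := by
  ext x
  simp only [mem_image, mem_filter, mem_univ, true_and, Finset.Nonempty, mem_children]
  constructor
  · rintro ⟨u, hu, rfl⟩
    exact ⟨u (Fin.last m), by rwa [Fin.snoc_init_self]⟩
  · rintro ⟨c, hc⟩
    exact ⟨_, hc, Fin.init_snoc _ _⟩

lemma card_eq_sum_card_children (A : Finset (Leaf (m + 1))) :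
    #A = ∑ x, #(children A x) := by
  rw [card_eq_sum_card_fiberwise (f := Fin.init) (t := univ) fun _ _ => mem_univ _]
  refine sum_congr rfl fun x _ => card_nbij' (fun u => u (Fin.last m))
    (fun c => (Fin.snoc x c : Leaf (m + 1))) ?_ ?_ ?_ ?_
  · intro u hu
    obtain ⟨hu, rfl⟩ := mem_filter.mp hu
    simpa [Fin.snoc_init_self] using hu
  · intro c hc
    simp_all
  · intro u hu
    obtain ⟨-, rfl⟩ := mem_filter.mp hu
    exact Fin.snoc_init_self u
  · intro c hc
    simp

lemma card_eq_card_image_init_add_card_doubled (A : Finset (Leaf (m + 1))) :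
    #A = #(A.image Fin.init) + #(doubled A) := by
  have hcard : ∀ s : Finset Bool,
      #s = (if s.Nonempty then 1 else 0) + (if s = univ then 1 else 0) := by
    decide
  rw [card_eq_sum_card_children, image_init_eq_filter, doubled, card_filter, card_filter,
    ← sum_add_distrib]
  exact sum_congr rfl fun x _ => hcard _

lemma card_filter_support_eq_full_eq {α : Type*} [Fintype α] {B D : Finset α} (hDB : D ⊆ B) :
    #(univ.filter fun φ : α → Finset Bool =>
        (univ.filter fun x => (φ x).Nonempty) = B ∧ (univ.filter fun x => φ x = univ) = D)
      = 2 ^ #(B \ D) := by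
  set t : α → Finset (Finset Bool) := fun x =>
    if x ∈ D then {univ} else if x ∈ B then {{true}, {false}} else {∅}
  have hfilter : (univ.filter fun φ : α → Finset Bool =>
      (univ.filter fun x => (φ x).Nonempty) = B ∧ (univ.filter fun x => φ x = univ) = D)
        = Fintype.piFinset t := by
    ext φ
    simp only [mem_filter, mem_univ, true_and, Fintype.mem_piFinset, Finset.ext_iff,
      ← forall_and]
    refine forall_congr' fun x => ?_
    generalize φ x = s
    by_cases hD : x ∈ D
    · simp only [t, hD, hDB hD, if_true, iff_true, mem_singleton]
      revert s
      decide
    by_cases hB : x ∈ B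
    · simp only [t, hD, hB, if_true, if_false, iff_true, iff_false, mem_insert, mem_singleton]
      revert s
      decide
    · simp only [t, hD, hB, if_false, iff_false, mem_singleton]
      revert s
      decide
  have hcard : ∀ x, #(t x) = if x ∈ B \ D then 2 else 1 := by
    intro x
    by_cases hD : x ∈ D <;> by_cases hB : x ∈ B <;> simp [t, hD, hB]
  rw [hfilter, Fintype.card_piFinset]
  simp only [hcard, prod_ite_mem, univ_inter, prod_const]

lemma card_filter_support_eq_card_full_eq {α : Type*} [Fintype α] (B : Finset α) (d : ℕ) :
    #(univ.filter fun φ : α → Finset Bool =>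
        (univ.filter fun x => (φ x).Nonempty) = B ∧ #(univ.filter fun x => φ x = univ) = d)
      = (#B).choose d * 2 ^ (#B - d) := by
  rw [card_eq_sum_card_fiberwise (f := fun φ : α → Finset Bool => univ.filter fun x => φ x = univ)
    (t := B.powersetCard d)]
  · rw [sum_congr rfl fun D hD => ?_, sum_const, card_powersetCard, smul_eq_mul]
    obtain ⟨hDB, rfl⟩ := mem_powersetCard.mp hD
    rw [filter_filter, ← card_sdiff_of_subset hDB, ← card_filter_support_eq_full_eq hDB]
    congr 1
    ext φ
    simp only [mem_filter, mem_univ, true_and]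
    constructor
    · rintro ⟨⟨hB, -⟩, hD⟩
      exact ⟨hB, hD⟩
    · rintro ⟨hB, hD⟩
      exact ⟨⟨hB, hD ▸ rfl⟩, hD⟩
  · intro φ hφ
    obtain ⟨rfl, hd⟩ := (mem_filter.mp hφ).2
    refine mem_powersetCard.mpr ⟨fun x hx => ?_, hd⟩
    simp only [mem_filter, mem_univ, true_and] at hx ⊢
    exact hx ▸ univ_nonempty

lemma card_filter_image_init_eq_card_doubled_eq (B : Finset (Leaf m)) (d : ℕ) :
    #(univ.filter fun A : Finset (Leaf (m + 1)) => A.image Fin.init = B ∧ #(doubled A) = d)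
      = (#B).choose d * 2 ^ (#B - d) := by
  rw [← card_filter_support_eq_card_full_eq]
  refine card_equiv childrenEquiv fun A => ?_
  simp only [mem_filter, mem_univ, true_and, image_init_eq_filter, doubled]
  rfl

lemma branchPts_zero (A : Finset (Leaf n)) : branchPts A 0 = A := by
  ext w
  simp only [branchPts, mem_image, mem_filter, mem_product, Prod.exists, meetAge_eq_zero_iff,
    trunc_zero]
  constructor
  · rintro ⟨u, v, ⟨⟨hu, -⟩, -⟩, rfl⟩
    exact hu
  · intro hw
    exact ⟨w, w, ⟨⟨hw, hw⟩, rfl⟩, rfl⟩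

lemma branchPts_one (A : Finset (Leaf (m + 1))) :
    branchPts A 1 = (doubled A).image fun x => Fin.snoc x false := by
  ext w
  simp only [branchPts, mem_image, mem_filter, mem_product, Prod.exists, mem_doubled,
    meetAge_eq_succ_iff (k := 0), meetAge_eq_zero_iff, trunc_succ, trunc_zero]
  constructor
  · rintro ⟨u, v, ⟨⟨hu, hv⟩, huv, hinit⟩, rfl⟩
    have hlast : u (Fin.last m) ≠ v (Fin.last m) := fun h =>
      huv (by rw [← Fin.snoc_init_self u, ← Fin.snoc_init_self v, hinit, h])
    have hBool : ∀ a b c : Bool, a ≠ b → c = a ∨ c = b := by decide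
    refine ⟨Fin.init u, fun c => ?_, rfl⟩
    rcases hBool _ _ c hlast with rfl | rfl
    · rwa [Fin.snoc_init_self]
    · rwa [hinit, Fin.snoc_init_self]
  · rintro ⟨x, hx, rfl⟩
    refine ⟨Fin.snoc x false, Fin.snoc x true, ⟨⟨hx false, hx true⟩, ?_, by simp⟩, by simp⟩
    simp [Fin.snoc_inj]

lemma branchPts_succ (A : Finset (Leaf (m + 1))) {k : ℕ} (hk : k ≠ 0) :
    branchPts A (k + 1) = (branchPts (A.image Fin.init) k).image fun x => Fin.snoc x false := by
  ext w
  simp only [branchPts, mem_image, mem_filter, mem_product, Prod.exists, meetAge_eq_succ_iff,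
    trunc_succ]
  constructor
  · rintro ⟨u, v, ⟨⟨hu, hv⟩, -, hm⟩, rfl⟩
    exact ⟨_, ⟨_, _, ⟨⟨⟨u, hu, rfl⟩, ⟨v, hv, rfl⟩⟩, hm⟩, rfl⟩, rfl⟩
  · rintro ⟨_, ⟨_, _, ⟨⟨⟨u, hu, rfl⟩, ⟨v, hv, rfl⟩⟩, hm⟩, rfl⟩, rfl⟩
    refine ⟨u, v, ⟨⟨hu, hv⟩, ?_, hm⟩, rfl⟩
    rintro rfl
    exact hk (hm ▸ meetAge_eq_zero_iff.mpr rfl)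

lemma bcount_zero (A : Finset (Leaf n)) : bcount A 0 = #A := by
  rw [bcount, branchPts_zero]

lemma bcount_one (A : Finset (Leaf (m + 1))) : bcount A 1 = #(doubled A) := by
  rw [bcount, branchPts_one, card_image_of_injective _ (Fin.snoc_left_injective _)]

lemma bcount_succ (A : Finset (Leaf (m + 1))) {k : ℕ} (hk : k ≠ 0) :
    bcount A (k + 1) = bcount (A.image Fin.init) k := by
  rw [bcount, branchPts_succ A hk, card_image_of_injective _ (Fin.snoc_left_injective _), bcount]

lemma card_eq_one_add_sum_bcount : ∀ {n : ℕ} {A : Finset (Leaf n)}, A.Nonempty →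
    #A = 1 + ∑ k ∈ Icc 1 n, bcount A k
  | 0, A, hA => by
    simp [hA.eq_univ]
  | m + 1, A, hA => by
    rw [card_eq_card_image_init_add_card_doubled, card_eq_one_add_sum_bcount (hA.image _),
      sum_Icc_eq_add_sum_shift _ (by omega), bcount_one]
    have : ∀ k ∈ Icc 1 m, bcount (A.image Fin.init) k = bcount A (k + 1) := fun k hk =>
      (bcount_succ A (Nat.one_le_iff_ne_zero.mp (mem_Icc.mp hk).1)).symm
    rw [sum_congr rfl this]
    ring

abbrev HasPattern (A : Finset (Leaf n)) (b : ℕ → ℕ) : Prop :=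
  A.Nonempty ∧ ∀ k ≤ n, bcount A k = b k

def parentPattern (b : ℕ → ℕ) : ℕ → ℕ :=
  fun k => if k = 0 then b 0 - b 1 else b (k + 1)

lemma hasPattern_succ_iff {b : ℕ → ℕ} (hb : b 1 ≤ b 0) {A : Finset (Leaf (m + 1))} :
    HasPattern A b ↔ HasPattern (A.image Fin.init) (parentPattern b) ∧ #(doubled A) = b 1 := by
  have hcard := card_eq_card_image_init_add_card_doubled A
  simp only [HasPattern, image_nonempty]
  constructor
  · rintro ⟨hA, hAb⟩
    have h0 := hAb 0 (by omega)
    have h1 := hAb 1 (by omega)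
    rw [bcount_zero] at h0
    rw [bcount_one] at h1
    refine ⟨⟨hA, fun k hk => ?_⟩, h1⟩
    rcases k with _ | k
    · rw [bcount_zero, parentPattern, if_pos rfl]
      omega
    · rw [parentPattern, if_neg k.succ_ne_zero, ← bcount_succ A k.succ_ne_zero]
      exact hAb _ (by omega)
  · rintro ⟨⟨hA, hB⟩, hd⟩
    refine ⟨hA, fun k hk => ?_⟩
    match k with
    | 0 =>
      have h0 := hB 0 (Nat.zero_le _)
      rw [bcount_zero, parentPattern, if_pos rfl] at h0
      rw [bcount_zero]
      omega
    | 1 => rw [bcount_one, hd]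
    | k + 2 => rw [bcount_succ A k.succ_ne_zero, hB (k + 1) (by omega), parentPattern,
        if_neg k.succ_ne_zero]

lemma card_filter_hasPattern_succ {b : ℕ → ℕ} (hb : b 1 ≤ b 0) :
    #(univ.filter fun A : Finset (Leaf (m + 1)) => HasPattern A b)
      = #(univ.filter fun B : Finset (Leaf m) => HasPattern B (parentPattern b))
        * ((b 0 - b 1).choose (b 1) * 2 ^ (b 0 - b 1 - b 1)) := by
  rw [card_eq_sum_card_fiberwise (f := fun A : Finset (Leaf (m + 1)) => A.image Fin.init)
    (t := univ.filter fun B => HasPattern B (parentPattern b))]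
  · rw [sum_congr rfl fun B hB => ?_, sum_const, smul_eq_mul]
    have hBb := (mem_filter.mp hB).2
    have hcardB : #B = b 0 - b 1 := by
      simpa [bcount_zero, parentPattern] using hBb.2 0 (Nat.zero_le _)
    rw [← hcardB, ← card_filter_image_init_eq_card_doubled_eq B (b 1), filter_filter]
    congr 1
    ext A
    simp only [mem_filter, mem_univ, true_and, hasPattern_succ_iff hb]
    constructor
    · rintro ⟨⟨-, hd⟩, rfl⟩
      exact ⟨rfl, hd⟩
    · rintro ⟨rfl, hd⟩
      exact ⟨⟨hBb, hd⟩, rfl⟩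
  · intro A hA
    exact mem_filter.mpr ⟨mem_univ _, ((hasPattern_succ_iff hb).mp (mem_filter.mp hA).2).1⟩

theorem card_filter_hasPattern : ∀ {n : ℕ} {b : ℕ → ℕ}, (∃ A : Finset (Leaf n), HasPattern A b) →
    #(univ.filter fun A : Finset (Leaf n) => HasPattern A b)
      = ∏ k ∈ Icc 1 n, (1 + ∑ j ∈ Icc (k + 1) n, b j).choose (b k) *
          2 ^ ((1 + ∑ j ∈ Icc (k + 1) n, b j) - b k)
  | 0, b, ⟨A, hA⟩ => by
    rw [Icc_eq_empty_of_lt zero_lt_one, prod_empty, card_eq_one]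
    refine ⟨univ, eq_singleton_iff_unique_mem.mpr ⟨?_, fun B hB => (mem_filter.mp hB).2.1.eq_univ⟩⟩
    exact mem_filter.mpr ⟨mem_univ _, hA.1.eq_univ ▸ hA⟩
  | m + 1, b, ⟨A, hA⟩ => by
    have heuler : b 0 = 1 + (b 1 + ∑ j ∈ Icc (1 + 1) (m + 1), b j) := by
      have := card_eq_one_add_sum_bcount hA.1
      rwa [sum_congr rfl fun k hk => hA.2 k (mem_Icc.mp hk).2,
        sum_Icc_eq_add_sum_shift _ (by omega), sum_Icc_shift, ← bcount_zero A,
        hA.2 0 (by omega)] at this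
    have hb : b 1 ≤ b 0 := by omega
    rw [card_filter_hasPattern_succ hb,
      card_filter_hasPattern ⟨A.image Fin.init, ((hasPattern_succ_iff hb).mp hA).1⟩,
      prod_Icc_eq_mul_prod_shift _ (by omega), mul_comm,
      show 1 + ∑ j ∈ Icc (1 + 1) (m + 1), b j = b 0 - b 1 by omega]
    congr 1
    refine prod_congr rfl fun k hk => ?_
    have hk0 : k ≠ 0 := Nat.one_le_iff_ne_zero.mp (mem_Icc.mp hk).1
    have hsum : ∑ j ∈ Icc (k + 1) m, parentPattern b j = ∑ j ∈ Icc (k + 1 + 1) (m + 1), b j := by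
      rw [← sum_Icc_shift]
      exact sum_congr rfl fun j hj => if_neg (by have := (mem_Icc.mp hj).1; omega)
    rw [hsum, parentPattern, if_neg hk0]

end

theorem stmt5_general (n : ℕ) (b : ℕ → ℕ)
    (hadm : ∃ A : Finset (Leaf n), A.Nonempty ∧ ∀ k ≤ n, bcount A k = b k) :
    (Finset.univ.filter (fun A : Finset (Leaf n) =>
        A.Nonempty ∧ ∀ k ≤ n, bcount A k = b k)).card
      = ∏ k ∈ Finset.Icc 1 n,
          Nat.choose (1 + ∑ j ∈ Finset.Icc (k + 1) n, b j) (b k) *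
            2 ^ ((1 + ∑ j ∈ Finset.Icc (k + 1) n, b j) - b k) :=
  card_filter_hasPattern hadm

/-- Lemma 3.1: the number of subsets `A ⊆ 𝕃₀⁽ⁿ⁾` whose first order
branching pattern equals a given admissible pattern `b` is
`∏_{k=1}^n C(a_k, b_k) 2^{a_k - b_k}` with `a_k = 1 + ∑_{j=k+1}^n b_j`. -/
theorem stmt5 (n : ℕ) (hn : 1 ≤ n) (b : ℕ → ℕ)
    (hadm : ∃ A : Finset (Leaf n), A.Nonempty ∧ ∀ k ≤ n, bcount A k = b k) :
    (Finset.univ.filter (fun A : Finset (Leaf n) =>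
        A.Nonempty ∧ ∀ k ≤ n, bcount A k = b k)).card
      = ∏ k ∈ Finset.Icc 1 n,
          Nat.choose (1 + ∑ j ∈ Finset.Icc (k + 1) n, b j) (b k) *
            2 ^ ((1 + ∑ j ∈ Finset.Icc (k + 1) n, b j) - b k) :=
  stmt5_general n b hadm

end PWC
end
end

section
/- Let (h_k)_{k≥0} be a non-decreasing real sequence and for each n let Φ_n be the first order branching clustering function on 𝕃₀⁽ⁿ⁾ with parameters (h_k)_{k=0}^n and h = h_n. Then the canonical free energy ω(ε) = lim_{n→∞} ω_n^{Φ_n}(ε) exists and is finite for all dyadic ε ∈ [0,1] if and only if ∑_k 2^{−k} h_k < ∞. -/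
open Filter
open scoped Classical

noncomputable section

namespace PWC

/-!
The full configuration `𝕃₀⁽ⁿ⁾` has exactly `2 ^ (n - k)` branching points of age `k`, so
`ω_n(1) = -(∑_{k ≤ n} 2⁻ᵏ h_k + 2⁻ⁿ h_n)`; as `h_k ≥ h_0`, convergence of this forces
`∑ 2⁻ᵏ h_k < ∞`.

Conversely, placing two configurations of `𝕋⁽ⁿ⁾` of size `a` under the two children of the
root of `𝕋⁽ⁿ⁺¹⁾` keeps all their branching points, adds one at the root, and replaces `h_n`
by `h_{n+1}`. Hence `W_{n+1}(2a) ≥ e^{-2(h_{n+1} - h_n)} W_n(a)²`, i.e.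
`ω_{n+1}(ε) ≥ ω_n(ε) - 2⁻ⁿ (h_{n+1} - h_n)` for dyadic `ε` and large `n`. These corrections
are summable, and `ω_n` is bounded above because `Φ_n ≥ -2ⁿ⁺¹ |h_0|`, so `ω_n(ε)` converges.
-/

section Tree

open Finset

variable {n : ℕ}

lemma meetAge_self (u : Leaf n) : meetAge u u = 0 := by simp [meetAge]

lemma meetAge_cons_cons_of_ne {b b' : Bool} (hb : b ≠ b') (u v : Leaf n) :
    meetAge (Fin.cons b u : Leaf (n + 1)) (Fin.cons b' v) = n + 1 := by
  have hne : (Fin.cons b u : Leaf (n + 1)) ≠ Fin.cons b' v := fun h => hb (Fin.cons_inj.mp h).1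
  have h0 : 0 ∈ {i : ℕ | ∃ h : i < n + 1,
      (Fin.cons b u : Leaf (n + 1)) ⟨i, h⟩ ≠ (Fin.cons b' v : Leaf (n + 1)) ⟨i, h⟩} :=
    ⟨n.succ_pos, by simpa using hb⟩
  rw [meetAge, if_neg hne, Nat.sInf_eq_zero.mpr (Or.inl h0)]
  rfl

lemma meetAge_cons_cons (b : Bool) (u v : Leaf n) :
    meetAge (Fin.cons b u : Leaf (n + 1)) (Fin.cons b v) = meetAge u v := by
  by_cases huv : u = v
  · simp [huv, meetAge_self]
  have hne : (Fin.cons b u : Leaf (n + 1)) ≠ Fin.cons b v :=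
    fun h => huv (Fin.cons_inj.mp h).2
  let p : ℕ → Prop := fun i => ∃ h : i < n + 1,
    (Fin.cons b u : Leaf (n + 1)) ⟨i, h⟩ ≠ (Fin.cons b v : Leaf (n + 1)) ⟨i, h⟩
  have hshift : {i | p (i + 1)} = {i : ℕ | ∃ h : i < n, u ⟨i, h⟩ ≠ v ⟨i, h⟩} := by
    ext i
    exact ⟨fun ⟨h, hi⟩ => ⟨Nat.lt_of_succ_lt_succ h, hi⟩, fun ⟨h, hi⟩ => ⟨Nat.succ_lt_succ h, hi⟩⟩
  have hpos : 1 ≤ sInf {i | p i} := by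
    obtain ⟨i, hi⟩ := Function.ne_iff.mp hne
    have hmem := Nat.sInf_mem (s := {i | p i}) ⟨i, i.isLt, hi⟩
    by_contra h0
    rw [Nat.lt_one_iff.mp (not_le.mp h0)] at hmem
    simp [p] at hmem
  rw [meetAge, meetAge, if_neg hne, if_neg huv, ← Nat.sInf_add hpos, hshift]
  omega

lemma trunc_cons {k : ℕ} (hk : k ≤ n) (b : Bool) (u : Leaf n) :
    trunc k (Fin.cons b u : Leaf (n + 1)) = Fin.cons b (trunc k u) := by
  funext i
  refine Fin.cases ?_ (fun j => ?_) i
  · simp [trunc]; omega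
  · simp [trunc, show n + 1 - k = n - k + 1 by omega]

lemma trunc_of_le {k : ℕ} (hk : n ≤ k) (u : Leaf n) : trunc k u = fun _ => false := by
  funext i
  simp [trunc]; omega

lemma branchPts_mono {A B : Finset (Leaf n)} (h : A ⊆ B) (k : ℕ) :
    branchPts A k ⊆ branchPts B k :=
  image_subset_image (filter_subset_filter _ (product_subset_product h h))

lemma bcount_mono {A B : Finset (Leaf n)} (h : A ⊆ B) (k : ℕ) : bcount A k ≤ bcount B k :=
  card_le_card (branchPts_mono h k)

end Tree

section Glue

open Finset

variable {n : ℕ}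

def glue (A₁ A₂ : Finset (Leaf n)) : Finset (Leaf (n + 1)) :=
  A₁.image (Fin.cons false) ∪ A₂.image (Fin.cons true)

lemma cons_false_mem_glue {A₁ A₂ : Finset (Leaf n)} {u : Leaf n} :
    (Fin.cons false u : Leaf (n + 1)) ∈ glue A₁ A₂ ↔ u ∈ A₁ := by
  simp [glue]

lemma cons_true_mem_glue {A₁ A₂ : Finset (Leaf n)} {u : Leaf n} :
    (Fin.cons true u : Leaf (n + 1)) ∈ glue A₁ A₂ ↔ u ∈ A₂ := by
  simp [glue]

lemma glue_injective :
    Function.Injective fun p : Finset (Leaf n) × Finset (Leaf n) => glue p.1 p.2 := by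
  rintro ⟨A₁, A₂⟩ ⟨B₁, B₂⟩ h
  simp only at h
  ext u
  · rw [← cons_false_mem_glue (A₂ := A₂), h, cons_false_mem_glue]
  · rw [← cons_true_mem_glue (A₁ := A₁), h, cons_true_mem_glue]

lemma card_glue (A₁ A₂ : Finset (Leaf n)) : (glue A₁ A₂).card = A₁.card + A₂.card := by
  rw [glue, card_union_of_disjoint,
    card_image_of_injective _ (Fin.cons_right_injective _),
    card_image_of_injective _ (Fin.cons_right_injective _)]
  simp [disjoint_left]

lemma glue_univ : glue (univ : Finset (Leaf n)) univ = univ := by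
  refine eq_univ_of_forall fun x => ?_
  rw [← Fin.cons_self_tail x]
  cases x 0 <;> simp [glue]

lemma branchPts_glue {k : ℕ} (hk : k ≤ n) (A₁ A₂ : Finset (Leaf n)) :
    branchPts (glue A₁ A₂) k = glue (branchPts A₁ k) (branchPts A₂ k) := by
  ext w
  simp only [branchPts, glue, mem_union, mem_image, mem_filter,
    mem_product, Prod.exists]
  constructor
  · rintro ⟨x, y, ⟨⟨⟨u, hu, rfl⟩ | ⟨u, hu, rfl⟩, ⟨v, hv, rfl⟩ | ⟨v, hv, rfl⟩⟩, hm⟩, rfl⟩ <;>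
      simp only [meetAge_cons_cons, meetAge_cons_cons_of_ne Bool.false_ne_true,
        meetAge_cons_cons_of_ne (by decide : true ≠ false), trunc_cons hk] at hm ⊢
    · exact Or.inl ⟨_, ⟨u, v, ⟨⟨hu, hv⟩, hm⟩, rfl⟩, rfl⟩
    · omega
    · omega
    · exact Or.inr ⟨_, ⟨u, v, ⟨⟨hu, hv⟩, hm⟩, rfl⟩, rfl⟩
  · rintro (⟨_, ⟨u, v, ⟨⟨hu, hv⟩, hm⟩, rfl⟩, rfl⟩ | ⟨_, ⟨u, v, ⟨⟨hu, hv⟩, hm⟩, rfl⟩, rfl⟩)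
    · exact ⟨_, _, ⟨⟨Or.inl ⟨u, hu, rfl⟩, Or.inl ⟨v, hv, rfl⟩⟩, by rwa [meetAge_cons_cons]⟩,
        trunc_cons hk _ u⟩
    · exact ⟨_, _, ⟨⟨Or.inr ⟨u, hu, rfl⟩, Or.inr ⟨v, hv, rfl⟩⟩, by rwa [meetAge_cons_cons]⟩,
        trunc_cons hk _ u⟩

lemma bcount_glue {k : ℕ} (hk : k ≤ n) (A₁ A₂ : Finset (Leaf n)) :
    bcount (glue A₁ A₂) k = bcount A₁ k + bcount A₂ k := by
  rw [bcount, branchPts_glue hk, card_glue, bcount, bcount]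

lemma bcount_glue_top {A₁ A₂ : Finset (Leaf n)} (h₁ : A₁.Nonempty) (h₂ : A₂.Nonempty) :
    bcount (glue A₁ A₂) (n + 1) = 1 := by
  obtain ⟨u, hu⟩ := h₁
  obtain ⟨v, hv⟩ := h₂
  rw [bcount, card_eq_one]
  refine ⟨fun _ => false, eq_singleton_iff_unique_mem.mpr ⟨?_, ?_⟩⟩
  · refine mem_image.mpr ⟨(Fin.cons false u, Fin.cons true v), ?_, trunc_of_le le_rfl _⟩
    simp [cons_false_mem_glue.mpr hu, cons_true_mem_glue.mpr hv,
      meetAge_cons_cons_of_ne Bool.false_ne_true]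
  · simp only [branchPts, mem_image]
    rintro _ ⟨p, -, rfl⟩
    exact trunc_of_le le_rfl _

lemma bcount_univ {k : ℕ} (hk : k ≤ n) :
    bcount (univ : Finset (Leaf n)) k = 2 ^ (n - k) := by
  induction n generalizing k with
  | zero =>
    obtain rfl : k = 0 := Nat.le_zero.mp hk
    simp [bcount, branchPts, univ_unique, filter_singleton, meetAge_self]
  | succ n ih =>
    rcases Nat.lt_or_eq_of_le hk with hk | rfl
    · rw [← glue_univ, bcount_glue (by omega), ih (by omega),
        show n + 1 - k = n - k + 1 by omega, pow_succ]
      ring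
    · rw [← glue_univ, bcount_glue_top univ_nonempty univ_nonempty]
      simp

lemma sum_bcount_add_one_le (A : Finset (Leaf n)) :
    ∑ k ∈ range (n + 1), bcount A k + 1 ≤ 2 ^ (n + 1) := by
  calc ∑ k ∈ range (n + 1), bcount A k + 1
      ≤ ∑ k ∈ range (n + 1), 2 ^ (n - k) + 1 := by
        gcongr with k hk
        exact (bcount_mono (subset_univ A) k).trans_eq
          (bcount_univ (Nat.lt_succ_iff.mp (mem_range.mp hk)))
    _ = 2 ^ (n + 1) := by
        have hreflect := sum_range_reflect (fun k => 2 ^ k) (n + 1)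
        simp only [Nat.add_sub_cancel] at hreflect
        simpa [hreflect, one_add_one_eq_two] using geom_sum_mul_add (1 : ℕ) (n + 1)

end Glue

section FreeEnergy

open Finset

variable {n : ℕ}

lemma W_pos (Φ : Finset (Leaf n) → ℝ) {a : ℕ} (ha : a ≤ 2 ^ n) : 0 < W n Φ a := by
  obtain ⟨B, -, hB⟩ := exists_subset_card_eq (s := (univ : Finset (Leaf n)))
    (by simpa using ha)
  exact sum_pos' (fun _ _ => (Real.exp_pos _).le) ⟨B, by simp [hB], Real.exp_pos _⟩

lemma W_zero (Φ : Finset (Leaf n) → ℝ) : W n Φ 0 = Real.exp (-Φ ∅) := by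
  simp [W, card_eq_zero, filter_eq']

lemma W_two_pow (Φ : Finset (Leaf n) → ℝ) : W n Φ (2 ^ n) = Real.exp (-Φ univ) := by
  have h : univ.filter (fun A : Finset (Leaf n) => A.card = 2 ^ n) = {univ} := by
    ext A
    simp [← card_eq_iff_eq_univ]
  rw [W, h, sum_singleton]

lemma omegaN_zero {Φ : Finset (Leaf n) → ℝ} (hΦ : Φ ∅ = 0) : omegaN n Φ 0 = 0 := by
  simp [omegaN, W_zero, hΦ]

lemma log_W_le {Φ : Finset (Leaf n) → ℝ} {C : ℝ} (hΦ : ∀ A, -C ≤ Φ A) {a : ℕ} (ha : a ≤ 2 ^ n) :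
    Real.log (W n Φ a) ≤ 2 ^ n * Real.log 2 + C := by
  have hW : W n Φ a ≤ 2 ^ 2 ^ n * Real.exp C :=
    calc W n Φ a ≤ ∑ A : Finset (Leaf n), Real.exp (-Φ A) :=
          sum_le_sum_of_subset_of_nonneg (filter_subset _ _)
            fun _ _ _ => (Real.exp_pos _).le
      _ ≤ ∑ _A : Finset (Leaf n), Real.exp C :=
          sum_le_sum fun A _ => Real.exp_le_exp.mpr (by linarith [hΦ A])
      _ = 2 ^ 2 ^ n * Real.exp C := by simp
  calc Real.log (W n Φ a) ≤ Real.log (2 ^ 2 ^ n * Real.exp C) := Real.log_le_log (W_pos Φ ha) hW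
    _ = 2 ^ n * Real.log 2 + C := by
      rw [Real.log_mul (by positivity) (Real.exp_ne_zero _), Real.log_pow, Real.log_exp]
      push_cast
      rfl

lemma W_sq_mul_exp_neg_le {Φ : Finset (Leaf n) → ℝ} {Ψ : Finset (Leaf (n + 1)) → ℝ} {a : ℕ}
    {δ : ℝ} (hΨ : ∀ A₁ A₂ : Finset (Leaf n), A₁.card = a → A₂.card = a →
      Ψ (glue A₁ A₂) ≤ Φ A₁ + Φ A₂ + δ) :
    W n Φ a ^ 2 * Real.exp (-δ) ≤ W (n + 1) Ψ (2 * a) := by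
  set S := univ.filter fun A : Finset (Leaf n) => A.card = a
  have hmaps : (S ×ˢ S).image (fun p => glue p.1 p.2) ⊆
      univ.filter fun B : Finset (Leaf (n + 1)) => B.card = 2 * a := by
    intro B hB
    obtain ⟨p, hp, rfl⟩ := mem_image.mp hB
    simp only [S, mem_product, mem_filter, mem_univ, true_and] at hp ⊢
    rw [card_glue, hp.1, hp.2, two_mul]
  calc W n Φ a ^ 2 * Real.exp (-δ)
      = ∑ p ∈ S ×ˢ S, Real.exp (-(Φ p.1 + Φ p.2 + δ)) := by
        rw [sq, W, sum_mul_sum, sum_product, sum_mul]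
        refine sum_congr rfl fun _ _ => ?_
        rw [sum_mul]
        refine sum_congr rfl fun _ _ => ?_
        rw [← Real.exp_add, ← Real.exp_add]
        ring_nf
    _ ≤ ∑ p ∈ S ×ˢ S, Real.exp (-Ψ (glue p.1 p.2)) := by
        refine sum_le_sum fun p hp => Real.exp_le_exp.mpr (neg_le_neg ?_)
        simp only [S, mem_product, mem_filter, mem_univ, true_and] at hp
        exact hΨ _ _ hp.1 hp.2
    _ = ∑ B ∈ (S ×ˢ S).image (fun p => glue p.1 p.2), Real.exp (-Ψ B) :=
        (sum_image (f := fun B => Real.exp (-Ψ B)) fun _ _ _ _ h => glue_injective h).symm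
    _ ≤ W (n + 1) Ψ (2 * a) :=
        sum_le_sum_of_subset_of_nonneg hmaps fun _ _ _ => (Real.exp_pos _).le

end FreeEnergy

section FirstOrder

open Finset

variable {n : ℕ} {hs : ℕ → ℝ}

lemma foPhi_glue {A₁ A₂ : Finset (Leaf n)} (h₁ : A₁.Nonempty) (h₂ : A₂.Nonempty) :
    foPhi (n + 1) hs (hs (n + 1)) (glue A₁ A₂) =
      foPhi n hs (hs n) A₁ + foPhi n hs (hs n) A₂ + 2 * (hs (n + 1) - hs n) := by
  have hglue : (glue A₁ A₂).Nonempty := by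
    rw [← card_pos, card_glue]
    exact Nat.add_pos_left (card_pos.mpr h₁) _
  have hsum : ∑ k ∈ range (n + 1), hs k * (bcount (glue A₁ A₂) k : ℝ) =
      ∑ k ∈ range (n + 1), hs k * (bcount A₁ k : ℝ) +
        ∑ k ∈ range (n + 1), hs k * (bcount A₂ k : ℝ) := by
    rw [← sum_add_distrib]
    refine sum_congr rfl fun k hk => ?_
    rw [bcount_glue (Nat.lt_succ_iff.mp (mem_range.mp hk)), Nat.cast_add, mul_add]
  rw [foPhi, foPhi, foPhi, if_neg hglue.ne_empty, if_neg h₁.ne_empty, if_neg h₂.ne_empty,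
    sum_range_succ, hsum, bcount_glue_top h₁ h₂, Nat.cast_one]
  ring

lemma foPhi_univ :
    foPhi n hs (hs n) univ = ∑ k ∈ range (n + 1), hs k * 2 ^ (n - k) + hs n := by
  rw [foPhi, if_neg univ_nonempty.ne_empty]
  congr 1
  refine sum_congr rfl fun k hk => ?_
  rw [bcount_univ (Nat.lt_succ_iff.mp (mem_range.mp hk)), Nat.cast_pow, Nat.cast_ofNat]

lemma neg_abs_mul_two_pow_le_foPhi (hmono : Monotone hs) (A : Finset (Leaf n)) :
    -(|hs 0| * 2 ^ (n + 1)) ≤ foPhi n hs (hs n) A := by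
  have hcount : ∑ k ∈ range (n + 1), (bcount A k : ℝ) + 1 ≤ 2 ^ (n + 1) := by
    exact_mod_cast sum_bcount_add_one_le A
  rw [foPhi]
  split_ifs
  · have : 0 ≤ |hs 0| * 2 ^ (n + 1) := by positivity
    linarith
  calc -(|hs 0| * 2 ^ (n + 1))
      ≤ -|hs 0| * (∑ k ∈ range (n + 1), (bcount A k : ℝ) + 1) := by
        rw [neg_mul]
        exact neg_le_neg (mul_le_mul_of_nonneg_left hcount (abs_nonneg _))
    _ ≤ hs 0 * (∑ k ∈ range (n + 1), (bcount A k : ℝ) + 1) :=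
        mul_le_mul_of_nonneg_right (neg_abs_le _) (by positivity)
    _ = ∑ k ∈ range (n + 1), hs 0 * (bcount A k : ℝ) + hs 0 := by
        rw [mul_add, mul_sum, mul_one]
    _ ≤ ∑ k ∈ range (n + 1), hs k * (bcount A k : ℝ) + hs n := by
        gcongr with k
        exacts [hmono k.zero_le, hmono n.zero_le]

lemma omegaN_one :
    omegaN n (foPhi n hs (hs n)) 1 =
      -(∑ k ∈ range (n + 1), hs k / 2 ^ k + hs n / 2 ^ n) := by
  have hfloor : ⌊(1 : ℝ) * 2 ^ n⌋₊ = 2 ^ n := by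
    rw [one_mul]
    exact_mod_cast Nat.floor_natCast (R := ℝ) (2 ^ n)
  rw [omegaN, hfloor, W_two_pow, Real.log_exp, foPhi_univ, neg_div, add_div, sum_div]
  congr 2
  refine sum_congr rfl fun k hk => ?_
  rw [div_eq_div_iff (by positivity) (by positivity), mul_assoc, ← pow_add,
    Nat.sub_add_cancel (Nat.lt_succ_iff.mp (mem_range.mp hk))]

lemma omegaN_le (hmono : Monotone hs) {ε : ℝ} (hε : ε ≤ 1) (n : ℕ) :
    omegaN n (foPhi n hs (hs n)) ε ≤ Real.log 2 + 2 * |hs 0| := by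
  have ha : ⌊ε * 2 ^ n⌋₊ ≤ 2 ^ n := Nat.floor_le_of_le <| by
    push_cast
    nlinarith [pow_pos (two_pos : (0 : ℝ) < 2) n]
  have hlog := log_W_le (neg_abs_mul_two_pow_le_foPhi hmono) ha
  rw [pow_succ] at hlog
  rw [omegaN, div_le_iff₀ (by positivity)]
  linarith

lemma floor_div_two_pow_mul_two_pow (j : ℕ) {m : ℕ} (hmn : m ≤ n) :
    ⌊(j : ℝ) / 2 ^ m * 2 ^ n⌋₊ = j * 2 ^ (n - m) := by
  have h : (j : ℝ) / 2 ^ m * 2 ^ n = ((j * 2 ^ (n - m) : ℕ) : ℝ) := by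
    rw [Nat.cast_mul, Nat.cast_pow, Nat.cast_ofNat, pow_sub₀ _ two_ne_zero hmn]
    ring
  rw [h, Nat.floor_natCast]

lemma omegaN_le_omegaN_succ_add {j m : ℕ} (hj : 1 ≤ j) (hjm : j ≤ 2 ^ m) (hmn : m ≤ n) :
    omegaN n (foPhi n hs (hs n)) (j / 2 ^ m) ≤
      omegaN (n + 1) (foPhi (n + 1) hs (hs (n + 1))) (j / 2 ^ m) +
        (hs (n + 1) - hs n) / 2 ^ n := by
  set a := j * 2 ^ (n - m)
  have ha : a ≤ 2 ^ n :=
    calc a ≤ 2 ^ m * 2 ^ (n - m) := Nat.mul_le_mul_right _ hjm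
      _ = 2 ^ n := by rw [← pow_add, Nat.add_sub_cancel' hmn]
  have ha₁ : 1 ≤ a := Nat.mul_pos hj (Nat.two_pow_pos _)
  have hsucc : j * 2 ^ (n + 1 - m) = 2 * a := by
    rw [Nat.sub_add_comm hmn, pow_succ]
    ring
  have hglue : W n (foPhi n hs (hs n)) a ^ 2 * Real.exp (-(2 * (hs (n + 1) - hs n))) ≤
      W (n + 1) (foPhi (n + 1) hs (hs (n + 1))) (2 * a) :=
    W_sq_mul_exp_neg_le fun A₁ A₂ h₁ h₂ =>
      (foPhi_glue (card_pos.mp (by omega)) (card_pos.mp (by omega))).le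
  have hW := W_pos (foPhi n hs (hs n)) ha
  have hlog := Real.log_le_log (by positivity) hglue
  rw [Real.log_mul (by positivity) (Real.exp_ne_zero _), Real.log_pow, Real.log_exp,
    Nat.cast_ofNat] at hlog
  rw [omegaN, omegaN, floor_div_two_pow_mul_two_pow j hmn,
    floor_div_two_pow_mul_two_pow j (hmn.trans n.le_succ), hsucc, pow_succ]
  calc Real.log (W n (foPhi n hs (hs n)) a) / 2 ^ n
      = (2 * Real.log (W n (foPhi n hs (hs n)) a) + -(2 * (hs (n + 1) - hs n))) / (2 ^ n * 2) +
          (hs (n + 1) - hs n) / 2 ^ n := by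
        field_simp
        ring
    _ ≤ _ := by gcongr

end FirstOrder

section Analysis

open Finset

lemma summable_of_sum_range_le_of_le {f g : ℕ → ℝ} (hg : Summable g) (hgf : ∀ k, g k ≤ f k)
    {C : ℝ} (hC : ∀ n, ∑ k ∈ range n, f k ≤ C) : Summable f := by
  obtain ⟨D, hD⟩ := hg.hasSum.tendsto_sum_nat.bddBelow_range
  have hdiff : Summable fun k => f k - g k :=
    summable_of_sum_range_le (c := C - D) (fun k => sub_nonneg.mpr (hgf k)) fun n => by
      rw [sum_sub_distrib]
      linarith [hC n, hD ⟨n, rfl⟩]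
  simpa using hdiff.add hg

lemma exists_tendsto_of_le_add_of_summable {x c : ℕ → ℝ} {B : ℝ} (hc : ∀ n, 0 ≤ c n)
    (hcs : Summable c) (hstep : ∀ n, x n ≤ x (n + 1) + c n) (hB : ∀ n, x n ≤ B) :
    ∃ L, Tendsto x atTop (nhds L) := by
  let y : ℕ → ℝ := fun n => x n + ∑ k ∈ range n, c k
  have hy : Monotone y := monotone_nat_of_le_succ fun n => by
    simp only [y, sum_range_succ]
    linarith [hstep n]
  have hyB : BddAbove (Set.range y) := by
    refine ⟨B + ∑' k, c k, ?_⟩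
    rintro _ ⟨n, rfl⟩
    linarith [hB n, hcs.sum_le_tsum (range n) fun k _ => hc k]
  refine ⟨_, ((tendsto_atTop_ciSup hy hyB).sub hcs.hasSum.tendsto_sum_nat).congr fun n => ?_⟩
  simp [y]

lemma exists_tendsto_of_eventually_le_add_of_summable {x c : ℕ → ℝ} {B : ℝ}
    (hc : ∀ n, 0 ≤ c n) (hcs : Summable c) (hstep : ∀ᶠ n in atTop, x n ≤ x (n + 1) + c n)
    (hB : ∀ n, x n ≤ B) : ∃ L, Tendsto x atTop (nhds L) := by
  obtain ⟨N, hN⟩ := eventually_atTop.mp hstep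
  obtain ⟨L, hL⟩ := exists_tendsto_of_le_add_of_summable (x := fun n => x (n + N))
    (fun n => hc (n + N)) ((summable_nat_add_iff N).mpr hcs)
    (fun n => by simpa only [add_right_comm n 1 N] using hN (n + N) (Nat.le_add_left N n))
    fun n => hB (n + N)
  exact ⟨L, (tendsto_add_atTop_iff_nat N).mp hL⟩

lemma summable_succ_sub_div_two_pow {h : ℕ → ℝ} (hsum : Summable fun k => h k / 2 ^ k) :
    Summable fun n => (h (n + 1) - h n) / 2 ^ n :=
  ((((summable_nat_add_iff 1).mpr hsum).mul_left 2).sub hsum).congr fun n => by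
    rw [pow_succ]
    field_simp

lemma exists_nat_eq_div_two_pow {ε : ℝ} (hε : ε ∈ Set.Icc (0 : ℝ) 1) (hd : IsDyadic ε) :
    ∃ j m : ℕ, j ≤ 2 ^ m ∧ ε = j / 2 ^ m := by
  obtain ⟨z, m, rfl⟩ := hd
  have h2m : (0 : ℝ) < 2 ^ m := by positivity
  have hz : (0 : ℝ) ≤ z := by simpa using (le_div_iff₀ h2m).mp hε.1
  lift z to ℕ using (by exact_mod_cast hz)
  refine ⟨z, m, ?_, by simp⟩
  exact_mod_cast (div_le_one h2m).mp hε.2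

end Analysis

lemma summable_of_tendsto_omegaN_one {hs : ℕ → ℝ} (hmono : Monotone hs) {L : ℝ}
    (hL : Tendsto (fun n => omegaN n (foPhi n hs (hs n)) 1) atTop (nhds L)) :
    Summable fun k => hs k / 2 ^ k := by
  have hg : Summable fun k : ℕ => hs 0 / 2 ^ k := by
    simpa [div_eq_mul_inv] using summable_geometric_two.mul_left (hs 0)
  have hgf : ∀ k, hs 0 / 2 ^ k ≤ hs k / 2 ^ k := fun k =>
    div_le_div_of_nonneg_right (hmono k.zero_le) (by positivity)
  obtain ⟨C, hC⟩ := (hL.neg.sub (hg.tendsto_atTop_zero.const_mul 2)).bddAbove_range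
  refine summable_of_sum_range_le_of_le hg hgf (C := C) fun n => ?_
  have := hC ⟨n, rfl⟩
  simp only [omegaN_one, neg_neg, Finset.sum_range_succ] at this
  linarith [hgf n]

/-- Proposition 1.12: for a non-decreasing sequence `(h_k)` and the
first order branching clustering functions `Φ_n` with parameters `(h_k)_{k=0}^n` and
`h = h_n`, the canonical free energy `ω(ε)` exists (finite) at every dyadic `ε ∈ [0,1]`
iff `∑_k 2⁻ᵏ h_k < ∞`. -/
theorem stmt6 (hs : ℕ → ℝ) (hmono : Monotone hs) :
    (∀ ε ∈ Set.Icc (0 : ℝ) 1, IsDyadic ε →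
        ∃ L : ℝ, Tendsto (fun n => omegaN n (foPhi n hs (hs n)) ε) atTop (nhds L)) ↔
      Summable (fun k : ℕ => hs k / 2 ^ k) := by
  constructor
  · intro hlim
    obtain ⟨L, hL⟩ := hlim 1 ⟨zero_le_one, le_rfl⟩ ⟨1, 0, by norm_num⟩
    exact summable_of_tendsto_omegaN_one hmono hL
  · intro hsum ε hε hdyadic
    obtain ⟨j, m, hjm, rfl⟩ := exists_nat_eq_div_two_pow hε hdyadic
    rcases Nat.eq_zero_or_pos j with rfl | hj
    · refine ⟨0, tendsto_const_nhds.congr fun n => ?_⟩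
      simp [omegaN_zero, foPhi]
    · exact exists_tendsto_of_eventually_le_add_of_summable
        (fun n => div_nonneg (sub_nonneg.mpr (hmono n.le_succ)) (by positivity))
        (summable_succ_sub_div_two_pow hsum)
        (eventually_atTop.mpr ⟨m, fun n => omegaN_le_omegaN_succ_add hj hjm⟩)
        (omegaN_le hmono hε.2)

end PWC
end
end
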